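/- arXiv:2207.06863 — 2 statements merged into one kernel-verified Lean document; each statement's English description precedes it below -/
import Mathlib

section
/- On a locally conformally Kähler manifold, for any 1-form ζ, the symmetrized covariant derivative satisfies δ*ζ = ∇(ζ^♯) − (1/2)(· ⌟ d_θ ζ)^♯ + (1/2) g(ζ, θ) Id, where δ* is the adjoint of the Riemannian divergence on symmetric endomorphisms and ∇ is the Weyl connection. -/
/-!
We formalize locally conformally symplectic/Kähler geometry in the standard
algebraic way: smooth real-valued functions on a smooth manifold `M` form the
commutative ring `Sm n M`, vector fields are derivations `VF n M` (with their
Lie bracket), differential forms are alternating `Sm n M`-multilinear maps on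
vector fields, and the exterior differential, Lie derivative, interior product,
connections, etc. are given by the usual Koszul-type formulas.
-/

open scoped Manifold
open Finset

/-- Smooth real-valued functions on `M`. -/
abbrev Sm (n : ℕ) (M : Type*) [TopologicalSpace M]
    [ChartedSpace (EuclideanSpace ℝ (Fin n)) M] : Type _ :=
  ContMDiffMap (𝓡 n) 𝓘(ℝ, ℝ) M ℝ (⊤ : ℕ∞)

/-- Vector fields on `M`, viewed as derivations of the ring of smooth functions. -/
abbrev VF (n : ℕ) (M : Type*) [TopologicalSpace M]
    [ChartedSpace (EuclideanSpace ℝ (Fin n)) M] : Type _ :=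
  Derivation ℝ (Sm n M) (Sm n M)

noncomputable section

variable {n : ℕ} {M : Type*} [TopologicalSpace M]
  [ChartedSpace (EuclideanSpace ℝ (Fin n)) M]
  [IsManifold (𝓡 n) (⊤ : ℕ∞) M]

/-- Differential of a function, `(df)(X) = X f`. -/
def d0 (f : Sm n M) : VF n M → Sm n M := fun X => X f

/-- Exterior differential of a 1-form (Koszul formula). -/
def d1 (θ : VF n M → Sm n M) : VF n M → VF n M → Sm n M :=
  fun X Y => X (θ Y) - Y (θ X) - θ ⁅X, Y⁆

/-- Exterior differential of a 2-form (Koszul formula). -/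
def d2 (ω : VF n M → VF n M → Sm n M) : VF n M → VF n M → VF n M → Sm n M :=
  fun X Y Z =>
    X (ω Y Z) - Y (ω X Z) + Z (ω X Y) - ω ⁅X, Y⁆ Z + ω ⁅X, Z⁆ Y - ω ⁅Y, Z⁆ X

/-- Wedge product of two 1-forms. -/
def wedge11 (θ α : VF n M → Sm n M) : VF n M → VF n M → Sm n M :=
  fun X Y => θ X * α Y - θ Y * α X

/-- Wedge product of a 1-form and a 2-form. -/
def wedge12 (θ : VF n M → Sm n M) (ω : VF n M → VF n M → Sm n M) :
    VF n M → VF n M → VF n M → Sm n M :=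
  fun X Y Z => θ X * ω Y Z - θ Y * ω X Z + θ Z * ω X Y

/-- Twisted differential `d_θ f = df - f θ` on functions. -/
def dTheta0 (θ : VF n M → Sm n M) (f : Sm n M) : VF n M → Sm n M :=
  fun X => X f - f * θ X

/-- Twisted differential `d_θ α = dα - θ ∧ α` on 1-forms. -/
def dTheta1 (θ α : VF n M → Sm n M) : VF n M → VF n M → Sm n M :=
  fun X Y => d1 α X Y - wedge11 θ α X Y

/-- Twisted differential `d_θ ω = dω - θ ∧ ω` on 2-forms. -/
def dTheta2 (θ : VF n M → Sm n M) (ω : VF n M → VF n M → Sm n M) :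
    VF n M → VF n M → VF n M → Sm n M :=
  fun X Y Z => d2 ω X Y Z - wedge12 θ ω X Y Z

/-- Lie derivative of a 2-form along a vector field. -/
def lieDeriv2 (X : VF n M) (ω : VF n M → VF n M → Sm n M) :
    VF n M → VF n M → Sm n M :=
  fun Y Z => X (ω Y Z) - ω ⁅X, Y⁆ Z - ω Y ⁅X, Z⁆

/-- Interior product `X ⌟ ω` of a vector field with a 2-form. -/
def iota (X : VF n M) (ω : VF n M → VF n M → Sm n M) : VF n M → Sm n M :=
  fun Y => ω X Y

/-- A 1-form: an additive, `C^∞`-homogeneous map on vector fields. -/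
def IsOneForm (θ : VF n M → Sm n M) : Prop :=
  (∀ X Y : VF n M, θ (X + Y) = θ X + θ Y) ∧
    ∀ (f : Sm n M) (X : VF n M), θ (f • X) = f * θ X

/-- A 2-form: alternating, additive and `C^∞`-homogeneous. -/
def IsTwoForm (ω : VF n M → VF n M → Sm n M) : Prop :=
  (∀ X Y : VF n M, ω X Y = - ω Y X) ∧
    (∀ X X' Y : VF n M, ω (X + X') Y = ω X Y + ω X' Y) ∧
    ∀ (f : Sm n M) (X Y : VF n M), ω (f • X) Y = f * ω X Y

/-- Locally conformally symplectic structure: `ω` a nondegenerate 2-form, `θ` a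
closed 1-form (the Lee form), with `dω = θ ∧ ω`. -/
def IsLCS (ω : VF n M → VF n M → Sm n M) (θ : VF n M → Sm n M) : Prop :=
  IsTwoForm ω ∧ IsOneForm θ ∧ (∀ X : VF n M, (∀ Y : VF n M, ω X Y = 0) → X = 0) ∧
    (∀ X Y : VF n M, d1 θ X Y = 0) ∧
    ∀ X Y Z : VF n M, d2 ω X Y Z = wedge12 θ ω X Y Z

/-- A Riemannian metric: symmetric, additive, `C^∞`-homogeneous, pointwise
nonnegative on the diagonal, and nondegenerate. -/
def IsMetric (g : VF n M → VF n M → Sm n M) : Prop :=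
  (∀ X Y : VF n M, g X Y = g Y X) ∧
    (∀ X X' Y : VF n M, g (X + X') Y = g X Y + g X' Y) ∧
    (∀ (f : Sm n M) (X Y : VF n M), g (f • X) Y = f * g X Y) ∧
    (∀ (X : VF n M) (x : M), 0 ≤ g X X x) ∧
    ∀ X : VF n M, (∀ Y : VF n M, g X Y = 0) → X = 0

/-- A linear connection on vector fields. -/
def IsConnection (D : VF n M → VF n M → VF n M) : Prop :=
  (∀ X X' Y : VF n M, D (X + X') Y = D X Y + D X' Y) ∧
    (∀ (f : Sm n M) (X Y : VF n M), D (f • X) Y = f • D X Y) ∧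
    (∀ X Y Y' : VF n M, D X (Y + Y') = D X Y + D X Y') ∧
    ∀ (f : Sm n M) (X Y : VF n M), D X (f • Y) = (X f) • Y + f • D X Y

/-- The Levi-Civita connection of `g`: the torsion-free metric connection. -/
def IsLeviCivita (g : VF n M → VF n M → Sm n M) (D : VF n M → VF n M → VF n M) : Prop :=
  IsConnection D ∧ (∀ X Y : VF n M, D X Y - D Y X = ⁅X, Y⁆) ∧
    ∀ X Y Z : VF n M, X (g Y Z) = g (D X Y) Z + g Y (D X Z)

/-- An almost complex structure on vector fields. -/
def IsAlmostComplex (J : VF n M → VF n M) : Prop :=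
  (∀ X Y : VF n M, J (X + Y) = J X + J Y) ∧
    (∀ (f : Sm n M) (X : VF n M), J (f • X) = f • J X) ∧
    ∀ X : VF n M, J (J X) = -X

/-- Integrability of `J`: vanishing of the Nijenhuis tensor. -/
def IsIntegrable (J : VF n M → VF n M) : Prop :=
  ∀ X Y : VF n M, ⁅J X, J Y⁆ - ⁅X, Y⁆ - J ⁅J X, Y⁆ - J ⁅X, J Y⁆ = 0

/-- A locally conformally Kähler structure `(g, J)` with Lee form `θ`: `g` a
`J`-Hermitian metric, `J` integrable, `θ` closed, and `dω = θ ∧ ω` where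
`ω = g(J·,·)` is the fundamental 2-form. -/
def IsLcK (g : VF n M → VF n M → Sm n M) (J : VF n M → VF n M)
    (θ : VF n M → Sm n M) : Prop :=
  IsMetric g ∧ IsAlmostComplex J ∧ IsIntegrable J ∧ IsOneForm θ ∧
    (∀ X Y : VF n M, g (J X) (J Y) = g X Y) ∧ (∀ X Y : VF n M, d1 θ X Y = 0) ∧
    ∀ X Y Z : VF n M,
      d2 (fun X Y => g (J X) Y) X Y Z = wedge12 θ (fun X Y => g (J X) Y) X Y Z

/-- Lie derivative of `J` along `X`, as an endomorphism of vector fields. -/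
def lieDerivJ (X : VF n M) (J : VF n M → VF n M) : VF n M → VF n M :=
  fun Y => ⁅X, J Y⁆ - J ⁅X, Y⁆


/-- Special conformal vector field: `d_θ(X ⌟ ω) = 0`. -/
def SpecConf (ω : VF n M → VF n M → Sm n M) (θ : VF n M → Sm n M) (X : VF n M) : Prop :=
  ∀ Y Z : VF n M, dTheta1 θ (iota X ω) Y Z = 0

/-- Twisted-Hamiltonian vector field: `X ⌟ ω` is `d_θ`-exact. -/
def TwHam (ω : VF n M → VF n M → Sm n M) (θ : VF n M → Sm n M) (X : VF n M) : Prop :=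
  ∃ h : Sm n M, ∀ Y : VF n M, ω X Y = dTheta0 θ h Y

/-!
Since the Levi-Civita connection is torsion free and metric, the antisymmetric part of `D ζ^♯`
is `dζ`, so the symmetrised derivative is `Y ↦ D_Y ζ^♯ - ½ (Y ⌟ dζ)^♯`. Splitting
`dζ = d_θ ζ + θ ∧ ζ`, the term `½ (θ(Y) ζ^♯ - ζ(Y) θ^♯)` coming from `θ ∧ ζ` is exactly what
turns `D_Y ζ^♯` into `∇_Y ζ^♯ + ½ g(ζ, θ) Y`.
-/

namespace IsMetric

variable {g : VF n M → VF n M → Sm n M}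

@[simps]
def leftLinear (hg : IsMetric g) (Z : VF n M) : VF n M →ₗ[Sm n M] Sm n M where
  toFun X := g X Z
  map_add' X X' := hg.2.1 X X' Z
  map_smul' f X := hg.2.2.1 f X Z

omit [IsManifold (𝓡 n) (⊤ : ℕ∞) M] in
theorem sub_right (hg : IsMetric g) (X Y Y' : VF n M) : g X (Y - Y') = g X Y - g X Y' := by
  rw [hg.1 X, hg.1 X, hg.1 X]
  exact map_sub (hg.leftLinear X) Y Y'

end IsMetric

omit [IsManifold (𝓡 n) (⊤ : ℕ∞) M] in
theorem IsLeviCivita.d1_eq_sub {g : VF n M → VF n M → Sm n M} {D : VF n M → VF n M → VF n M}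
    {ζ : VF n M → Sm n M} {ζs : VF n M} (hD : IsLeviCivita g D) (hg : IsMetric g)
    (hζs : ∀ Y : VF n M, g ζs Y = ζ Y) (X Y : VF n M) :
    d1 ζ X Y = g (D X ζs) Y - g (D Y ζs) X := by
  obtain ⟨-, htor, hmet⟩ := hD
  have hbracket : ζ ⁅X, Y⁆ = g ζs (D X Y) - g ζs (D Y X) := by
    rw [← hζs, ← htor, hg.sub_right]
  rw [d1, ← hζs, ← hζs, hmet, hmet, hbracket, hg.1 ζs (D X Y), hg.1 ζs (D Y X)]
  ring

theorem deltaStar_eq_weyl_formula_general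
    (g : VF n M → VF n M → Sm n M) (J : VF n M → VF n M) (θ ζ : VF n M → Sm n M)
    (θs ζs : VF n M) (D W : VF n M → VF n M → VF n M) (s : VF n M → VF n M)
    (N : ℕ) (e : Fin N → VF n M)
    (hlck : IsLcK g J θ) (hD : IsLeviCivita g D)
    (hθs : ∀ Y : VF n M, g θs Y = θ Y)
    (hζs : ∀ Y : VF n M, g ζs Y = ζ Y)
    (hW : ∀ X Y : VF n M,
      W X Y = D X Y - ((1:ℝ)/2) • (θ X • Y + θ Y • X - g X Y • θs))
    (hs : ∀ Y Z : VF n M, g (s Y) Z = dTheta1 θ ζ Y Z)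
    (hframe : ∀ X : VF n M, X = ∑ α, g X (e α) • e α) :
    ∀ Y : VF n M,
      (∑ α, ((1:ℝ)/2) • ((g (D Y ζs) (e α) + g (D (e α) ζs) Y) • e α)) =
        W Y ζs - ((1:ℝ)/2) • s Y + ((1:ℝ)/2) • (g ζs θs • Y) := by
  intro Y
  have hg := hlck.1
  set V := D Y ζs - ((1:ℝ)/2) • (s Y + θ Y • ζs - ζ Y • θs) with hV
  have hcoeff (Z : VF n M) : ((1:ℝ)/2) • (g (D Y ζs) Z + g (D Z ζs) Y) = g V Z := by
    have hd1 : d1 ζ Y Z = g (s Y) Z + (θ Y * g ζs Z - ζ Y * g θs Z) := by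
      rw [hs, hθs, hζs, dTheta1, wedge11]
      ring
    have hdual := hD.d1_eq_sub hg hζs Y Z
    change _ = hg.leftLinear Z V
    simp only [hV, map_sub, map_add, map_smul, LinearMap.map_smul_of_tower]
    simp only [hg.leftLinear_apply, smul_eq_mul]
    linear_combination (norm := module) ((1:ℝ)/2) • (hd1.symm.trans hdual)
  calc _ = ∑ α, g V (e α) • e α := sum_congr rfl fun α _ => by rw [← smul_assoc, hcoeff]
    _ = V := (hframe V).symm
    _ = _ := by
      rw [hW, ← hθs ζs, hg.1 θs, hg.1 Y, hζs Y]
      module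

/-- On a locally conformally Kähler manifold, for any 1-form `ζ`,
`δ*ζ = ∇(ζ^♯) − (1/2)(· ⌟ d_θ ζ)^♯ + (1/2) g(ζ,θ) Id`, where `δ*` is the adjoint
of the Riemannian divergence, given in a local orthonormal frame `(e_α)` by
`(δ*ζ)(Y) = (1/2) Σ_α (g(D_Y ζ^♯, e_α) + g(D_{e_α} ζ^♯, Y)) e_α`, and `∇` is the
Weyl connection. The vector field `s Y` is `(Y ⌟ d_θ ζ)^♯`. -/
theorem deltaStar_eq_weyl_formula
    (g : VF n M → VF n M → Sm n M) (J : VF n M → VF n M) (θ ζ : VF n M → Sm n M)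
    (θs ζs : VF n M) (D W : VF n M → VF n M → VF n M) (s : VF n M → VF n M)
    (N : ℕ) (e : Fin N → VF n M)
    (hlck : IsLcK g J θ) (hD : IsLeviCivita g D)
    (hθs : ∀ Y : VF n M, g θs Y = θ Y)
    (hζ : IsOneForm ζ) (hζs : ∀ Y : VF n M, g ζs Y = ζ Y)
    (hW : ∀ X Y : VF n M,
      W X Y = D X Y - ((1:ℝ)/2) • (θ X • Y + θ Y • X - g X Y • θs))
    (hs : ∀ Y Z : VF n M, g (s Y) Z = dTheta1 θ ζ Y Z)
    (horth : ∀ α β : Fin N, g (e α) (e β) = if α = β then 1 else 0)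
    (hframe : ∀ X : VF n M, X = ∑ α, g X (e α) • e α) :
    ∀ Y : VF n M,
      (∑ α, ((1:ℝ)/2) • ((g (D Y ζs) (e α) + g (D (e α) ζs) Y) • e α)) =
        W Y ζs - ((1:ℝ)/2) • s Y + ((1:ℝ)/2) • (g ζs θs • Y) :=
  deltaStar_eq_weyl_formula_general g J θ ζ θs ζs D W s N e hlck hD hθs hζs hW hs hframe

end
end

section
/- On a locally conformally symplectic manifold, the special conformal vector fields aut*(M,[ω]) = {X : d_θ(X ⌟ ω) = 0} form a Lie subalgebra of vector fields, the twisted-Hamiltonian vector fields ham(M,[ω]) = {X : X ⌟ ω is d_θ-exact} form a Lie subalgebra, and [aut*(M,[ω]), aut*(M,[ω])] ⊆ ham(M,[ω]). -/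
/-!
We formalize locally conformally symplectic/Kähler geometry in the standard
algebraic way: smooth real-valued functions on a smooth manifold `M` form the
commutative ring `Sm n M`, vector fields are derivations `VF n M` (with their
Lie bracket), differential forms are alternating `Sm n M`-multilinear maps on
vector fields, and the exterior differential, Lie derivative, interior product,
connections, etc. are given by the usual Koszul-type formulas.
-/

open scoped Manifold
open Finset

noncomputable section

variable {n : ℕ} {M : Type*} [TopologicalSpace M]
  [ChartedSpace (EuclideanSpace ℝ (Fin n)) M]
  [IsManifold (𝓡 n) (⊤ : ℕ∞) M]

/-!
Both `X ↦ X ⌟ ω` and `d_θ` are linear, which gives closure under sums and real multiples.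
Since `θ` is closed, `d_θ ∘ d_θ = 0`, so twisted-Hamiltonian fields are special conformal.
The heart of the matter is a twisted Cartan identity: if `d_θ(X ⌟ ω) = d_θ(Y ⌟ ω) = 0`, then
`dω = θ ∧ ω` forces `⁅X, Y⁆ ⌟ ω = d_θ(ω(Y, X))`. This puts `[aut*, aut*]` inside `ham`, and
together with `ham ⊆ aut*` makes both spaces closed under the bracket.
-/

section

omit [IsManifold (𝓡 n) (⊤ : ℕ∞) M]

variable {ω : VF n M → VF n M → Sm n M} {θ : VF n M → Sm n M} {X Y : VF n M}

theorem specConf_iff : SpecConf ω θ X ↔ dTheta1 θ (iota X ω) = 0 := by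
  simp only [SpecConf, funext_iff, Pi.zero_apply]

theorem twHam_iff : TwHam ω θ X ↔ ∃ h, iota X ω = dTheta0 θ h := by
  simp only [TwHam, funext_iff, iota]

theorem IsTwoForm.iota_add (hω : IsTwoForm ω) (X Y : VF n M) :
    iota (X + Y) ω = iota X ω + iota Y ω :=
  funext fun Z => hω.2.1 X Y Z

theorem IsTwoForm.iota_smul (hω : IsTwoForm ω) (r : ℝ) (X : VF n M) :
    iota (r • X) ω = r • iota X ω :=
  funext fun Z => by
    rw [← algebraMap_smul (Sm n M) r X]
    simp only [iota, hω.2.2, Pi.smul_apply, Algebra.smul_def]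

theorem dTheta0_add (f g : Sm n M) : dTheta0 θ (f + g) = dTheta0 θ f + dTheta0 θ g := by
  ext X : 1
  simp only [dTheta0, Pi.add_apply, map_add]
  ring

theorem dTheta0_smul (r : ℝ) (f : Sm n M) : dTheta0 θ (r • f) = r • dTheta0 θ f := by
  ext X : 1
  simp only [dTheta0, Pi.smul_apply, Derivation.map_smul, smul_mul_assoc, smul_sub]

theorem dTheta1_add (α β : VF n M → Sm n M) :
    dTheta1 θ (α + β) = dTheta1 θ α + dTheta1 θ β := by
  ext X Y : 2
  simp only [dTheta1, d1, wedge11, Pi.add_apply, map_add]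
  ring

theorem dTheta1_smul (r : ℝ) (α : VF n M → Sm n M) :
    dTheta1 θ (r • α) = r • dTheta1 θ α := by
  ext X Y : 2
  simp only [dTheta1, d1, wedge11, Pi.smul_apply, Derivation.map_smul, mul_smul_comm, smul_sub]

theorem dTheta1_dTheta0 (hθ : ∀ X Y : VF n M, d1 θ X Y = 0) (f : Sm n M) :
    dTheta1 θ (dTheta0 θ f) = 0 := by
  ext X Y : 2
  have hθXY : X (θ Y) - Y (θ X) - θ ⁅X, Y⁆ = 0 := hθ X Y
  have hbr : ⁅X, Y⁆ f = X (Y f) - Y (X f) := Derivation.commutator_apply ..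
  simp only [dTheta1, d1, wedge11, dTheta0, map_sub, Derivation.leibniz, smul_eq_mul, hbr,
    Pi.zero_apply]
  linear_combination (-f) * hθXY

theorem iota_lie_eq_dTheta0_of_specConf (hω : IsTwoForm ω)
    (hdω : ∀ X Y Z : VF n M, d2 ω X Y Z = wedge12 θ ω X Y Z)
    (hX : SpecConf ω θ X) (hY : SpecConf ω θ Y) :
    iota ⁅X, Y⁆ ω = dTheta0 θ (ω Y X) := by
  ext Z : 1
  have hXYZ := hX Y Z
  have hYXZ := hY X Z
  have hdωXYZ := hdω X Y Z
  simp only [dTheta1, d1, wedge11, iota] at hXYZ hYXZ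
  simp only [d2, wedge12, hω.1 ⁅X, Z⁆ Y, hω.1 ⁅Y, Z⁆ X] at hdωXYZ
  simp only [iota, dTheta0, hω.1 Y X, map_neg] at hYXZ ⊢
  linear_combination hYXZ - hXYZ - hdωXYZ

theorem SpecConf.add (hω : IsTwoForm ω) (hX : SpecConf ω θ X) (hY : SpecConf ω θ Y) :
    SpecConf ω θ (X + Y) :=
  specConf_iff.2 <| by
    rw [hω.iota_add, dTheta1_add, specConf_iff.1 hX, specConf_iff.1 hY, add_zero]

theorem SpecConf.smul (hω : IsTwoForm ω) (r : ℝ) (hX : SpecConf ω θ X) :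
    SpecConf ω θ (r • X) :=
  specConf_iff.2 <| by rw [hω.iota_smul, dTheta1_smul, specConf_iff.1 hX, smul_zero]

theorem TwHam.add (hω : IsTwoForm ω) (hX : TwHam ω θ X) (hY : TwHam ω θ Y) :
    TwHam ω θ (X + Y) := by
  obtain ⟨f, hf⟩ := twHam_iff.1 hX
  obtain ⟨g, hg⟩ := twHam_iff.1 hY
  exact twHam_iff.2 ⟨f + g, by rw [hω.iota_add, hf, hg, dTheta0_add]⟩

theorem TwHam.smul (hω : IsTwoForm ω) (r : ℝ) (hX : TwHam ω θ X) : TwHam ω θ (r • X) := by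
  obtain ⟨f, hf⟩ := twHam_iff.1 hX
  exact twHam_iff.2 ⟨r • f, by rw [hω.iota_smul, hf, dTheta0_smul]⟩

theorem TwHam.specConf (hθ : ∀ X Y : VF n M, d1 θ X Y = 0) (hX : TwHam ω θ X) :
    SpecConf ω θ X := by
  obtain ⟨f, hf⟩ := twHam_iff.1 hX
  exact specConf_iff.2 <| by rw [hf, dTheta1_dTheta0 hθ]

theorem SpecConf.lie_twHam (hω : IsTwoForm ω)
    (hdω : ∀ X Y Z : VF n M, d2 ω X Y Z = wedge12 θ ω X Y Z)
    (hX : SpecConf ω θ X) (hY : SpecConf ω θ Y) : TwHam ω θ ⁅X, Y⁆ :=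
  twHam_iff.2 ⟨_, iota_lie_eq_dTheta0_of_specConf hω hdω hX hY⟩

end

/-- On a locally conformally symplectic manifold, the special
conformal vector fields form a Lie subalgebra of vector fields, the
twisted-Hamiltonian vector fields form a Lie subalgebra, and
`[aut*(M,[ω]), aut*(M,[ω])] ⊆ ham(M,[ω])`. -/
theorem specConf_twHam_lie_subalgebras
    (ω : VF n M → VF n M → Sm n M) (θ : VF n M → Sm n M) (h : IsLCS ω θ) :
    (∀ X Y : VF n M, SpecConf ω θ X → SpecConf ω θ Y → SpecConf ω θ (X + Y)) ∧
      (∀ (r : ℝ) (X : VF n M), SpecConf ω θ X → SpecConf ω θ (r • X)) ∧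
      (∀ X Y : VF n M, SpecConf ω θ X → SpecConf ω θ Y → SpecConf ω θ ⁅X, Y⁆) ∧
      (∀ X Y : VF n M, TwHam ω θ X → TwHam ω θ Y → TwHam ω θ (X + Y)) ∧
      (∀ (r : ℝ) (X : VF n M), TwHam ω θ X → TwHam ω θ (r • X)) ∧
      (∀ X Y : VF n M, TwHam ω θ X → TwHam ω θ Y → TwHam ω θ ⁅X, Y⁆) ∧
      ∀ X Y : VF n M, SpecConf ω θ X → SpecConf ω θ Y → TwHam ω θ ⁅X, Y⁆ := by
  obtain ⟨hω, -, -, hθ, hdω⟩ := h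
  refine ⟨fun _ _ => SpecConf.add hω, fun r _ => SpecConf.smul hω r,
    fun _ _ hX hY => (hX.lie_twHam hω hdω hY).specConf hθ,
    fun _ _ => TwHam.add hω, fun r _ => TwHam.smul hω r,
    fun _ _ hX hY => (hX.specConf hθ).lie_twHam hω hdω (hY.specConf hθ),
    fun _ _ hX hY => hX.lie_twHam hω hdω hY⟩

end
end
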